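/- Let G be a connected graph, k a positive integer, and suppose there exists a polynomial q of degree at most k with q(A(G)) = I + A(G^k), where A(G^k) is the adjacency matrix of the k-th power graph. If G is regular with largest eigenvalue λ₁ and remaining eigenvalues λ₂,...,λₙ, and q' = q - 1, then α_k(G) ≤ min{ |{i : q'(λᵢ) ≥ 0}| , |{i : q'(λᵢ) ≤ 0}| }. -/

import Mathlib

open Polynomial Finset

/-- The independence number of a simple graph: the maximum size of a set of
pairwise non-adjacent vertices. -/
noncomputable def SimpleGraph.finIndepNum {V : Type*} [Fintype V] (G : SimpleGraph V) : ℕ :=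
  sSup {m | ∃ s : Finset V, s.card = m ∧ ∀ u ∈ s, ∀ v ∈ s, ¬ G.Adj u v}

/-- The `k`-th power of a graph: distinct vertices are adjacent iff
their distance in `G` is (finite and) at most `k`. -/
def SimpleGraph.power {V : Type*} (G : SimpleGraph V) (k : ℕ) : SimpleGraph V where
  Adj u v := u ≠ v ∧ G.Reachable u v ∧ G.dist u v ≤ k
  symm := by
    constructor
    intro u v ⟨h1, h2, h3⟩
    exact ⟨h1.symm, h2.symm, by rwa [SimpleGraph.dist_comm]⟩
  loopless := by constructor; intro u ⟨h, _⟩; exact h rfl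

/-- The `k`-independence number: the maximum size of a set of vertices at
pairwise distance greater than `k`. -/
noncomputable def SimpleGraph.kIndepNum {V : Type*} [Fintype V] (G : SimpleGraph V) (k : ℕ) : ℕ :=
  (G.power k).finIndepNum

/-!
Since `q(A) = I + A(G^k)`, the adjacency matrix `B` of `G^k` equals `q'(A)`, so an orthonormal
eigenbasis of `A` is one of `B`, with eigenvalues `q'(λᵢ)`. For a `k`-independent set `s`, `B`
vanishes on `s × s`, so the quadratic form `xᵀBx` is zero on the vectors supported on `s`, while
it is positive on the nonzero vectors of the span of the eigenvectors with `q'(λᵢ) > 0`. These two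
subspaces meet only in `0`, which gives `|s| ≤ #{i | q'(λᵢ) ≤ 0}` (Cvetković's inertia bound);
the same argument for `-B` gives the other bound.
-/

open Matrix

theorem Module.Basis.finrank_span_image_finset {ι K V : Type*} [DivisionRing K] [AddCommGroup V]
    [Module K V] (b : Module.Basis ι K V) (s : Finset ι) :
    Module.finrank K (Submodule.span K (b '' s)) = s.card := by
  classical
  rw [← coe_image, finrank_span_finset_eq_card, card_image_of_injective _ b.injective]
  simpa using (b.linearIndependent.linearIndepOn (s : Set ι)).id_image

lemma Finset.card_filter_comp_eq_of_map_eq {ι α : Type*} [Fintype ι] {f g : ι → α}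
    (h : univ.val.map f = univ.val.map g) (p : α → Prop) [DecidablePred p] :
    #{i | p (f i)} = #{i | p (g i)} := by
  have key : ∀ f : ι → α, #{i | p (f i)} = (univ.val.map f).countP p := fun f =>
    (Multiset.countP_map f _ p).symm
  rw [key, key, h]

namespace Matrix

lemma aeval_mulVec_of_mulVec_eq_smul {ι R : Type*} [Fintype ι] [DecidableEq ι] [CommRing R]
    {A : Matrix ι ι R} {v : ι → R} {μ : R} (hv : A *ᵥ v = μ • v) (p : R[X]) :
    aeval A p *ᵥ v = p.eval μ • v := by
  rw [← toLinAlgEquiv'_apply, ← aeval_algHom_apply]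
  exact Module.End.aeval_apply_of_mem_apply_eq_smul (by simpa [toLinAlgEquiv'_apply] using hv)

lemma IsHermitian.map_eigenvalues_eq_of_charpoly_eq {ι : Type*} [Fintype ι] [DecidableEq ι]
    {A : Matrix ι ι ℝ} (hA : A.IsHermitian) {lam : ι → ℝ}
    (hchar : A.charpoly = ∏ i, (X - C (lam i))) :
    univ.val.map hA.eigenvalues = univ.val.map lam := by
  have := hA.roots_charpoly_eq_eigenvalues
  rw [hchar, roots_prod _ _ (prod_ne_zero_iff.mpr fun i _ => X_sub_C_ne_zero _)] at this
  simpa using this.symm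

lemma dotProduct_mulVec_eq_zero_of_eq_zero_on {ι R : Type*} [Fintype ι]
    [NonUnitalNonAssocSemiring R] {B : Matrix ι ι R} {s : Set ι}
    (hs : ∀ u ∈ s, ∀ v ∈ s, B u v = 0) {x : ι → R} (hx : ∀ i ∉ s, x i = 0) :
    x ⬝ᵥ B *ᵥ x = 0 := by
  refine sum_eq_zero fun u _ => ?_
  by_cases hu : u ∈ s
  · refine mul_eq_zero_of_right _ (sum_eq_zero fun v _ => ?_)
    by_cases hv : v ∈ s
    · simp [hs u hu v hv]
    · simp [hx v hv]
  · simp [hx u hu]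

variable {ι : Type*} [Fintype ι] {B : Matrix ι ι ℝ}
  {b : OrthonormalBasis ι ℝ (EuclideanSpace ℝ ι)} {μ : ι → ℝ}

lemma dotProduct_mulVec_eq_sum_mul_sq (hb : ∀ i, B *ᵥ b i = μ i • b i)
    (x : EuclideanSpace ℝ ι) : x ⬝ᵥ B *ᵥ x = ∑ i, μ i * b.repr x i ^ 2 := by
  have hx : (x : ι → ℝ) = ∑ i, b.repr x i • (b i : ι → ℝ) := by
    conv_lhs => rw [← b.sum_repr x]
    simp [WithLp.ofLp_sum]
  have hrepr : ∀ i, (x : ι → ℝ) ⬝ᵥ b i = b.repr x i := fun i => by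
    simp [b.repr_apply_apply, EuclideanSpace.inner_eq_star_dotProduct]
  conv_lhs => enter [2, 2]; rw [hx]
  simp only [mulVec_sum, mulVec_smul, hb, dotProduct_sum, dotProduct_smul, hrepr, smul_eq_mul]
  exact sum_congr rfl fun i _ => by ring

lemma dotProduct_mulVec_pos_of_mem_span_pos (hb : ∀ i, B *ᵥ b i = μ i • b i)
    {x : EuclideanSpace ℝ ι} (hx : x ∈ Submodule.span ℝ (b.toBasis '' {i | 0 < μ i}))
    (hx0 : x ≠ 0) : 0 < x ⬝ᵥ B *ᵥ x := by
  have hsupp : ∀ i, μ i ≤ 0 → b.repr x i = 0 := fun i hi => by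
    by_contra h
    exact hi.not_gt ((Module.Basis.mem_span_image _).mp hx (by simpa using h))
  obtain ⟨j, hj⟩ : ∃ j, b.repr x j ≠ 0 := by
    by_contra! h
    exact hx0 (b.repr.injective (by ext i; simp [h i]))
  have hμj : 0 < μ j := by
    by_contra! h
    exact hj (hsupp j h)
  rw [dotProduct_mulVec_eq_sum_mul_sq hb]
  refine sum_pos' (fun i _ => ?_) ⟨j, mem_univ j, by positivity⟩
  rcases le_or_gt (μ i) 0 with hi | hi
  · simp [hsupp i hi]
  · positivity

theorem card_le_card_nonpos_eigenvalues (hb : ∀ i, B *ᵥ b i = μ i • b i)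
    {s : Finset ι} (hs : ∀ u ∈ s, ∀ v ∈ s, B u v = 0) : #s ≤ #{i | μ i ≤ 0} := by
  classical
  let W := Submodule.span ℝ ((EuclideanSpace.basisFun ι ℝ).toBasis '' s)
  let P := Submodule.span ℝ (b.toBasis '' ↑({i | 0 < μ i} : Finset ι))
  have hdisj : Disjoint W P := by
    rw [Submodule.disjoint_def]
    intro x hxW hxP
    by_contra hx0
    have hW : x ⬝ᵥ B *ᵥ x = 0 := by
      refine dotProduct_mulVec_eq_zero_of_eq_zero_on hs fun i hi => ?_
      by_contra h
      exact hi ((Module.Basis.mem_span_image _).mp hxW (by simpa using h))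
    exact (dotProduct_mulVec_pos_of_mem_span_pos hb (by simpa [P] using hxP) hx0).ne' hW
  have hdim := Submodule.finrank_add_finrank_le_of_disjoint hdisj
  rw [Module.Basis.finrank_span_image_finset, Module.Basis.finrank_span_image_finset,
    finrank_euclideanSpace] at hdim
  have hcard : #{i | μ i ≤ 0} + #{i | 0 < μ i} = Fintype.card ι := by
    simpa using card_filter_add_card_filter_not (s := univ) (fun i => μ i ≤ 0)
  omega

theorem card_le_card_nonneg_eigenvalues (hb : ∀ i, B *ᵥ b i = μ i • b i)
    {s : Finset ι} (hs : ∀ u ∈ s, ∀ v ∈ s, B u v = 0) : #s ≤ #{i | 0 ≤ μ i} := by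
  simpa using card_le_card_nonpos_eigenvalues (B := -B) (μ := -μ)
    (fun i => by rw [neg_mulVec, hb, Pi.neg_apply, neg_smul])
    (fun u hu v hv => by rw [neg_apply, hs u hu v hv, neg_zero])

end Matrix

lemma SimpleGraph.finIndepNum_le {V : Type*} [Fintype V] {G : SimpleGraph V} {m : ℕ}
    (h : ∀ s : Finset V, (∀ u ∈ s, ∀ v ∈ s, ¬ G.Adj u v) → #s ≤ m) : G.finIndepNum ≤ m :=
  csSup_le ⟨0, ∅, by simp⟩ fun _ ⟨s, hs, hind⟩ => hs ▸ h s hind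

theorem inertia_bound_power_general {n k : ℕ} (G : SimpleGraph (Fin n))
    [DecidableRel G.Adj] [DecidableRel (G.power k).Adj]
    (lam : Fin n → ℝ)
    (hchar : (G.adjMatrix ℝ).charpoly = ∏ i, (X - C (lam i)))
    (q : Polynomial ℝ)
    (hqA : aeval (G.adjMatrix ℝ) q = 1 + (G.power k).adjMatrix ℝ) :
    G.kIndepNum k ≤ min ((univ.filter fun i => 0 ≤ (q - 1).eval (lam i)).card)
      ((univ.filter fun i => (q - 1).eval (lam i) ≤ 0).card) := by
  have hA := G.isHermitian_adjMatrix ℝ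
  have hB : (G.power k).adjMatrix ℝ = aeval (G.adjMatrix ℝ) (q - 1) := by
    rw [map_sub, hqA, map_one, add_sub_cancel_left]
  have heig : ∀ i, (G.power k).adjMatrix ℝ *ᵥ hA.eigenvectorBasis i =
      (q - 1).eval (hA.eigenvalues i) • hA.eigenvectorBasis i := fun i => by
    rw [hB]
    exact aeval_mulVec_of_mulVec_eq_smul (hA.mulVec_eigenvectorBasis i) _
  have hcount := card_filter_comp_eq_of_map_eq (hA.map_eigenvalues_eq_of_charpoly_eq hchar)
  refine SimpleGraph.finIndepNum_le fun s hs => ?_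
  have hzero : ∀ u ∈ s, ∀ v ∈ s, (G.power k).adjMatrix ℝ u v = 0 := fun u hu v hv => by
    simp [hs u hu v hv]
  exact le_min
    ((card_le_card_nonneg_eigenvalues heig hzero).trans_eq (hcount fun x => 0 ≤ (q - 1).eval x))
    ((card_le_card_nonpos_eigenvalues heig hzero).trans_eq (hcount fun x => (q - 1).eval x ≤ 0))

/-- If `G` is a connected regular graph and `q` is a polynomial of degree at most `k`
with `q(A(G)) = I + A(G^k)`, then with `q' = q - 1`,
`α_k(G) ≤ min{ #{i : q'(λᵢ) ≥ 0}, #{i : q'(λᵢ) ≤ 0} }`. -/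
theorem inertia_bound_power {n d k : ℕ} (hk : 1 ≤ k) (G : SimpleGraph (Fin n))
    [DecidableRel G.Adj] [DecidableRel (G.power k).Adj]
    (hconn : G.Connected) (hreg : G.IsRegularOfDegree d)
    (lam : Fin n → ℝ) (hlam : Antitone lam)
    (hchar : (G.adjMatrix ℝ).charpoly = ∏ i, (X - C (lam i)))
    (q : Polynomial ℝ) (hq : q.natDegree ≤ k)
    (hqA : aeval (G.adjMatrix ℝ) q = 1 + (G.power k).adjMatrix ℝ) :
    G.kIndepNum k ≤ min ((univ.filter fun i => 0 ≤ (q - 1).eval (lam i)).card)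
      ((univ.filter fun i => (q - 1).eval (lam i) ≤ 0).card) :=
  inertia_bound_power_general G lam hchar q hqA
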